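/- arXiv:2011.05953 — 2 statements merged into one kernel-verified Lean document; each statement's English description precedes it below -/
import Mathlib

section
/- Let S be a complete separable metric space, let f ∈ F₁(a,b) be admissible, and let Γ ⊂ C_b(S) be admissible. Then: (i) if Γ is strictly admissible, then W^Γ has the divergence property on Borel probability measures on S; (ii) if both f and Γ are strictly admissible, then D_f^Γ has the divergence property on Borel probability measures on S. -/
open MeasureTheory Filter Set Topology ENNReal
open scoped Classical

noncomputable section

/-- The set of bounded measurable real-valued functions on `Ω`. -/
def Mb (Ω : Type*) [MeasurableSpace Ω] : Set (Ω → ℝ) :=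
  {g | Measurable g ∧ ∃ C : ℝ, ∀ x, |g x| ≤ C}

/-- The set of bounded continuous real-valued functions on `S`. -/
def Cb (S : Type*) [TopologicalSpace S] : Set (S → ℝ) :=
  {g | Continuous g ∧ ∃ C : ℝ, ∀ x, |g x| ≤ C}

/-- The positive part of an extended real number, as an element of `ℝ≥0∞`. -/
def posE (x : EReal) : ℝ≥0∞ := if x = ⊤ then ⊤ else ENNReal.ofReal x.toReal

/-- The extended-real-valued integral of an `EReal`-valued function, defined as the
difference of the lower integrals of the positive and negative parts, with the
convention `∞ - ∞ = -∞`. -/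
def eIntegral {Ω : Type*} [MeasurableSpace Ω] (P : Measure Ω) (h : Ω → EReal) : EReal :=
  ((∫⁻ x, posE (h x) ∂P : ℝ≥0∞) : EReal) - ((∫⁻ x, posE (-(h x)) ∂P : ℝ≥0∞) : EReal)

/-- The Legendre transform `f*(y) = sup_x {x*y - f(x)}` of `f : ℝ → (-∞,∞]`. -/
def fstar (f : ℝ → EReal) (y : ℝ) : EReal := ⨆ x : ℝ, (((x * y : ℝ) : EReal) - f x)

/-- `f : ℝ → (-∞,∞]` is (the convex LSC extension of) an element of `F₁(a,b)`:
convex, lower semicontinuous, never `-∞`, finite exactly on the interval `(a,b)`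
(with `+∞` strictly outside `[a,b]`), and `f(1) = 0` with `a < 1 < b`. -/
structure IsF1 (a b : EReal) (f : ℝ → EReal) : Prop where
  a_lt_one : a < ((1 : ℝ) : EReal)
  one_lt_b : ((1 : ℝ) : EReal) < b
  convex : ∀ x y t : ℝ, 0 < t → t < 1 →
    f (t * x + (1 - t) * y) ≤ ((t : ℝ) : EReal) * f x + (((1 - t : ℝ)) : EReal) * f y
  lsc : LowerSemicontinuous f
  ne_bot : ∀ x, f x ≠ ⊥
  finite_on : ∀ x : ℝ, a < (x : EReal) → (x : EReal) < b → f x ≠ ⊤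
  top_outside : ∀ x : ℝ, ((x : EReal) < a ∨ b < (x : EReal)) → f x = ⊤
  at_one : f 1 = 0

/-- `Λ_f^P[g] = inf_{ν ∈ ℝ} {ν + E_P[f*(g - ν)]}`. -/
def LambdaF {Ω : Type*} [MeasurableSpace Ω] (f : ℝ → EReal) (P : Measure Ω) (g : Ω → ℝ) :
    EReal :=
  ⨅ ν : ℝ, ((ν : EReal) + eIntegral P (fun x => fstar f (g x - ν)))

/-- The classical `f`-divergence `D_f(Q‖P) = E_P[f(dQ/dP)]` if `Q ≪ P`, else `∞`. -/
def fDivE {Ω : Type*} [MeasurableSpace Ω] (f : ℝ → EReal) (Q P : Measure Ω) : EReal :=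
  if Q ≪ P then eIntegral P (fun x => f ((Q.rnDeriv P x).toReal)) else ⊤

/-- The `(f,Γ)`-divergence `D_f^Γ(Q‖P) = sup_{g ∈ Γ} {E_Q[g] - Λ_f^P[g]}`. -/
def fGammaDiv {Ω : Type*} [MeasurableSpace Ω] (f : ℝ → EReal) (Γ : Set (Ω → ℝ))
    (Q P : Measure Ω) : EReal :=
  ⨆ g ∈ Γ, (((∫ x, g x ∂Q : ℝ) : EReal) - LambdaF f P g)

/-- The `Γ`-IPM `W^Γ(Q,P) = sup_{g ∈ Γ} {E_Q[g] - E_P[g]}`. -/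
def ipmW {Ω : Type*} [MeasurableSpace Ω] (Γ : Set (Ω → ℝ)) (Q P : Measure Ω) : EReal :=
  ⨆ g ∈ Γ, (((∫ x, g x ∂Q : ℝ) : EReal) - ((∫ x, g x ∂P : ℝ) : EReal))


/-- Integration of a function against a finite signed measure, via the Jordan
decomposition. -/
def signedIntegral {S : Type*} [MeasurableSpace S] (μ : MeasureTheory.SignedMeasure S)
    (g : S → ℝ) : ℝ :=
  (∫ x, g x ∂μ.toJordanDecomposition.posPart) - ∫ x, g x ∂μ.toJordanDecomposition.negPart

/-- The weak topology on real-valued functions on `S` generated by the maps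
`g ↦ ∫ g dμ` for all finite signed (Borel) measures `μ` on `S`. -/
def weakTop (S : Type*) [MeasurableSpace S] : TopologicalSpace (S → ℝ) :=
  ⨅ μ : MeasureTheory.SignedMeasure S,
    TopologicalSpace.induced (fun g => signedIntegral μ g) inferInstance

/-- A set `Ψ` of functions is `P(S)`-determining: if two probability measures give the
same integral to every `ψ ∈ Ψ`, then they are equal. -/
def Determining {S : Type*} [MeasurableSpace S] (Ψ : Set (S → ℝ)) : Prop :=
  ∀ Q P : Measure S, IsProbabilityMeasure Q → IsProbabilityMeasure P →
    (∀ ψ ∈ Ψ, (∫ x, ψ x ∂Q) = ∫ x, ψ x ∂P) → Q = P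

/-- `Γ ⊆ C_b(S)` is admissible: it contains `0`, is convex, and is closed in `C_b(S)` for
the weak topology generated by the finite signed measures. -/
def AdmissibleGamma {S : Type*} [TopologicalSpace S] [MeasurableSpace S]
    (Γ : Set (S → ℝ)) : Prop :=
  (fun _ => (0 : ℝ)) ∈ Γ ∧ Convex ℝ Γ ∧ Γ ⊆ Cb S ∧
    ∀ g ∈ Cb S, g ∈ @closure _ (weakTop S) Γ → g ∈ Γ

/-- `Γ` is strictly admissible: there is a `P(S)`-determining set `Ψ ⊆ C_b(S)` such that
for all `ψ ∈ Ψ` there are `c ∈ ℝ` and `ε > 0` with `c ± εψ ∈ Γ`. -/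
def StrictlyAdmissibleGamma {S : Type*} [TopologicalSpace S] [MeasurableSpace S]
    (Γ : Set (S → ℝ)) : Prop :=
  ∃ Ψ : Set (S → ℝ), Ψ ⊆ Cb S ∧ Determining Ψ ∧
    ∀ ψ ∈ Ψ, ∃ c ε : ℝ, 0 < ε ∧
      (fun x => c + ε * ψ x) ∈ Γ ∧ (fun x => c - ε * ψ x) ∈ Γ

/-- `f` is admissible: `f*` is finite everywhere and `lim_{y → -∞} f*(y) < ∞`. -/
def AdmissibleF (f : ℝ → EReal) : Prop :=
  (∀ y : ℝ, fstar f y ≠ ⊤) ∧ ∃ M : ℝ, ∀ᶠ y in Filter.atBot, fstar f y ≤ (M : EReal)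

/-- `f` is strictly convex at `1`: `f` is not affine on any neighborhood of `1`. -/
def StrictlyConvexAtOne (f : ℝ → EReal) : Prop :=
  ∀ ε : ℝ, 0 < ε → ¬ ∃ m q : ℝ, ∀ x : ℝ, |x - 1| < ε → f x = ((m * x + q : ℝ) : EReal)

/-- `f` is strictly convex on the interval `(a,b)` (with `a, b ∈ [-∞,∞]`). -/
def StrictConvexOnAB (a b : EReal) (f : ℝ → EReal) : Prop :=
  ∀ x y t : ℝ, a < (x : EReal) → (x : EReal) < b → a < (y : EReal) → (y : EReal) < b →
    x ≠ y → 0 < t → t < 1 →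
    f (t * x + (1 - t) * y) < ((t : ℝ) : EReal) * f x + (((1 - t : ℝ)) : EReal) * f y

end

/-!
Both functionals are suprema over `Γ ∋ 0` of `∫ g dQ - L g`, where `L g = ∫ g dP` or
`L g = Λ_f^P[g]`. Since `f(1) = 0` we have `f*(y) ≥ y`, so `Λ_f^P[g] ≥ ∫ g dP`; and for a
subgradient `y₀` of `f` at `1` we have `f*(y₀) = y₀`, so `Λ_f^P[0] ≤ 0`. This gives
nonnegativity and vanishing at `Q = P`. Conversely, if the supremum vanishes, it suffices to
show `∫ g dQ ≤ ∫ g dP` for all `g ∈ Γ`: applied to `c ± εψ` this gives `∫ ψ dQ = ∫ ψ dP` on a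
determining class. For `W^Γ` this is immediate. For `D_f^Γ`, strict convexity at `1`
provides points `z` arbitrarily close to `1` with `f(z) > y₀ (z - 1)`. Then `f` also lies above
the tilted lines `(y₀ + v) x - (y₀ + v z)` for small `v` with `v (z - 1) ≥ 0`, so
`f*(y₀ + v) ≤ y₀ + v z`. Testing against `t g ∈ Γ` for small `t > 0`, with a shift that gives
`v = t (g - m)` the right sign, yields `∫ g dQ ≤ ∫ g dP + 2 ‖g‖∞ |z - 1|`.
-/

section EIntegral

variable {Ω : Type*} [MeasurableSpace Ω] {P : Measure Ω}

lemma posE_coe (r : ℝ) : posE (r : EReal) = ENNReal.ofReal r := by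
  simp [posE]

lemma posE_mono {x y : EReal} (h : x ≤ y) : posE x ≤ posE y := by
  induction x using EReal.rec with
  | bot => simp [posE]
  | top => rw [top_le_iff.mp h]
  | coe x =>
    induction y using EReal.rec with
    | bot => simp at h
    | top => simp [posE]
    | coe y =>
      rw [posE_coe, posE_coe]
      exact ENNReal.ofReal_le_ofReal (EReal.coe_le_coe_iff.mp h)

lemma eIntegral_mono {h₁ h₂ : Ω → EReal} (h : ∀ x, h₁ x ≤ h₂ x) :
    eIntegral P h₁ ≤ eIntegral P h₂ :=
  EReal.sub_le_sub
    (EReal.coe_ennreal_le_coe_ennreal_iff.mpr (lintegral_mono fun x => posE_mono (h x)))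
    (EReal.coe_ennreal_le_coe_ennreal_iff.mpr
      (lintegral_mono fun x => posE_mono (EReal.neg_le_neg_iff.mpr (h x))))

lemma eIntegral_coe {h : Ω → ℝ} (hi : Integrable h P) :
    eIntegral P (fun x => (h x : EReal)) = ((∫ x, h x ∂P : ℝ) : EReal) := by
  have hpos : (∫⁻ x, ENNReal.ofReal (h x) ∂P) ≠ ⊤ :=
    (lintegral_ofReal_le_lintegral_enorm h).trans_lt hi.2 |>.ne
  have hneg : (∫⁻ x, ENNReal.ofReal (-h x) ∂P) ≠ ⊤ :=
    (lintegral_ofReal_le_lintegral_enorm _).trans_lt hi.neg.2 |>.ne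
  simp only [eIntegral, posE_coe, ← EReal.coe_neg]
  rw [← EReal.coe_ennreal_toReal hpos, ← EReal.coe_ennreal_toReal hneg, ← EReal.coe_sub,
    integral_eq_lintegral_pos_part_sub_lintegral_neg_part hi]

end EIntegral

lemma fstar_le_of_affine_le {f : ℝ → EReal} {α β : ℝ}
    (h : ∀ x, ((α * x + β : ℝ) : EReal) ≤ f x) : fstar f α ≤ ((-β : ℝ) : EReal) :=
  iSup_le fun x => (EReal.sub_le_sub le_rfl (h x)).trans_eq <| by
    rw [← EReal.coe_sub]; congr 1; ring

lemma le_fstar {f : ℝ → EReal} (h1 : f 1 ≤ 0) (y : ℝ) : (y : EReal) ≤ fstar f y :=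
  le_iSup_of_le 1 <| by
    rw [one_mul]
    exact (sub_zero (y : EReal)).symm.le.trans (EReal.sub_le_sub le_rfl h1)

namespace IsF1

variable {a b : EReal} {f : ℝ → EReal}

lemma eventually_ne_top (hf : IsF1 a b f) : ∀ᶠ x : ℝ in 𝓝 1, f x ≠ ⊤ := by
  have hcont := continuous_coe_real_ereal.tendsto 1
  filter_upwards [hcont.eventually (lt_mem_nhds hf.a_lt_one),
    hcont.eventually (gt_mem_nhds hf.one_lt_b)] with x hax hxb
  exact hf.finite_on x hax hxb

lemma coe_toReal (hf : IsF1 a b f) {x : ℝ} (hx : f x ≠ ⊤) : f x = ((f x).toReal : EReal) :=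
  (EReal.coe_toReal hx (hf.ne_bot x)).symm

lemma convex_coe (hf : IsF1 a b f) {x y t fx fy : ℝ} (ht₀ : 0 < t) (ht₁ : t < 1)
    (hx : f x = fx) (hy : f y = fy) :
    f (t * x + (1 - t) * y) ≤ ((t * fx + (1 - t) * fy : ℝ) : EReal) := by
  simpa only [hx, hy, ← EReal.coe_mul, ← EReal.coe_add] using hf.convex x y t ht₀ ht₁

lemma slope_le_slope (hf : IsF1 a b f) {x z fx fz : ℝ} (hx : x < 1) (hz : 1 < z)
    (hfx : f x = fx) (hfz : f z = fz) : -fx / (1 - x) ≤ fz / (z - 1) := by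
  have hzx : 0 < z - x := by linarith
  have h := hf.convex_coe (t := (z - 1) / (z - x)) (div_pos (by linarith) hzx)
    ((div_lt_one hzx).mpr (by linarith)) hfx hfz
  rw [show (z - 1) / (z - x) * x + (1 - (z - 1) / (z - x)) * z = 1 by field_simp; ring,
    hf.at_one, EReal.coe_nonneg] at h
  rw [show (z - 1) / (z - x) * fx + (1 - (z - 1) / (z - x)) * fz
      = ((z - 1) * fx + (1 - x) * fz) / (z - x) by field_simp; ring, le_div_iff₀ hzx] at h
  rw [div_le_div_iff₀ (by linarith) (by linarith)]
  linarith

lemma exists_subgradient (hf : IsF1 a b f) :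
    ∃ y₀ : ℝ, ∀ x, ((y₀ * (x - 1) : ℝ) : EReal) ≤ f x := by
  obtain ⟨r, hr, hfin⟩ := Metric.eventually_nhds_iff.mp hf.eventually_ne_top
  have hdist : dist (1 + r / 2) 1 < r ∧ dist (1 - r / 2) 1 < r := by
    simp only [Real.dist_eq, add_sub_cancel_left, sub_sub_cancel_left, abs_neg,
      abs_of_pos (half_pos hr)]
    constructor <;> linarith
  let slopes : Set ℝ := {s | ∃ z : ℝ, 1 < z ∧ f z ≠ ⊤ ∧ s = (f z).toReal / (z - 1)}
  have hne : slopes.Nonempty :=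
    ⟨_, 1 + r / 2, by linarith, hfin hdist.1, rfl⟩
  have hlow : ∀ x, x < 1 → f x ≠ ⊤ → ∀ s ∈ slopes, -(f x).toReal / (1 - x) ≤ s := by
    rintro x hx hxt s ⟨z, hz, hzt, rfl⟩
    exact hf.slope_le_slope hx hz (hf.coe_toReal hxt) (hf.coe_toReal hzt)
  refine ⟨sInf slopes, fun x => ?_⟩
  rcases eq_or_ne (f x) ⊤ with hxt | hxt
  · simp [hxt]
  rw [hf.coe_toReal hxt, EReal.coe_le_coe_iff]
  rcases lt_trichotomy x 1 with hx | rfl | hx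
  · have := (div_le_iff₀ (by linarith)).mp (le_csInf hne (hlow x hx hxt))
    linarith
  · simp [hf.at_one]
  · have hbdd : BddBelow slopes := ⟨_, hlow _ (by linarith) (hfin hdist.2)⟩
    exact (le_div_iff₀ (by linarith)).mp (csInf_le hbdd ⟨x, hx, hxt, rfl⟩)

lemma exists_gt_tangent (hf : IsF1 a b f) (hsc : StrictlyConvexAtOne f) {y₀ : ℝ}
    (hsub : ∀ x, ((y₀ * (x - 1) : ℝ) : EReal) ≤ f x) {ε : ℝ} (hε : 0 < ε) :
    ∃ z w : ℝ, z ≠ 1 ∧ |z - 1| < ε ∧ f z = w ∧ y₀ * (z - 1) < w := by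
  by_contra! h
  obtain ⟨r, hr, hfin⟩ := Metric.eventually_nhds_iff.mp hf.eventually_ne_top
  refine hsc (min ε r) (lt_min hε hr) ⟨y₀, -y₀, fun x hx => ?_⟩
  rcases eq_or_ne x 1 with rfl | hx1
  · simp [hf.at_one]
  have hxt := hfin (hx.trans_le (min_le_right ε r))
  rw [hf.coe_toReal hxt, EReal.coe_eq_coe_iff]
  have hle := h x _ hx1 (hx.trans_le (min_le_left ε r)) (hf.coe_toReal hxt)
  have hge := EReal.coe_le_coe_iff.mp ((hsub x).trans_eq (hf.coe_toReal hxt))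
  linarith

lemma affine_le_of_gap (hf : IsF1 a b f) {y₀ : ℝ}
    (hsub : ∀ x, ((y₀ * (x - 1) : ℝ) : EReal) ≤ f x) {z w v : ℝ} (hz : z ≠ 1)
    (hfz : f z = w) (hv : 0 ≤ v * (z - 1)) (hvw : v * (z - 1) ≤ w - y₀ * (z - 1)) (x : ℝ) :
    (((y₀ + v) * x + -(y₀ + v * z) : ℝ) : EReal) ≤ f x := by
  rcases le_or_gt (v * (x - z)) 0 with hxz | hxz
  · exact (EReal.coe_le_coe_iff.mpr (by nlinarith)).trans (hsub x)
  rcases eq_or_ne (f x) ⊤ with hxt | hxt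
  · simp [hxt]
  rw [hf.coe_toReal hxt, EReal.coe_le_coe_iff]
  have hv0 : v ≠ 0 := by rintro rfl; simp at hxz
  have hvz : 0 < v * (z - 1) := hv.lt_of_ne (mul_ne_zero hv0 (sub_ne_zero.mpr hz)).symm
  -- `z` lies strictly between `1` and `x`
  have hzx : 0 < (z - 1) * (x - z) := by
    have : 0 < v ^ 2 * ((z - 1) * (x - z)) := by nlinarith [mul_pos hvz hxz]
    exact pos_of_mul_pos_right this (sq_nonneg v)
  have hz1 : 0 < (z - 1) ^ 2 := by positivity
  set D := (x - 1) * (z - 1)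
  have hD0 : 0 < D := by nlinarith
  have hconv := hf.convex_coe (x := 1) (y := x) (t := (z - 1) * (x - z) / D)
    (div_pos hzx hD0) ((div_lt_one hD0).mpr (by nlinarith)) hf.at_one (hf.coe_toReal hxt)
  rw [show (z - 1) * (x - z) / D * 1 + (1 - (z - 1) * (x - z) / D) * x = z by
    field_simp; ring, hfz, EReal.coe_le_coe_iff,
    show (z - 1) * (x - z) / D * 0 + (1 - (z - 1) * (x - z) / D) * (f x).toReal
      = (z - 1) ^ 2 * (f x).toReal / D by field_simp; ring, le_div_iff₀ hD0] at hconv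
  have : (z - 1) ^ 2 * ((y₀ + v) * (x - 1)) ≤ (z - 1) ^ 2 * (f x).toReal := by
    nlinarith [mul_le_mul_of_nonneg_right (show (y₀ + v) * (z - 1) ≤ w by linarith) hD0.le]
  nlinarith [le_of_mul_le_mul_left this hz1]

end IsF1

section LambdaF

variable {Ω : Type*} [MeasurableSpace Ω] {P : Measure Ω} {f : ℝ → EReal}

lemma LambdaF_le {g u : Ω → ℝ} (ν : ℝ) (hu : Integrable u P)
    (h : ∀ x, fstar f (g x - ν) ≤ u x) : LambdaF f P g ≤ ν + ((∫ x, u x ∂P : ℝ) : EReal) :=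
  (iInf_le _ ν).trans (add_le_add_right ((eIntegral_mono h).trans_eq (eIntegral_coe hu)) _)

lemma integral_le_LambdaF [IsProbabilityMeasure P] (h1 : f 1 ≤ 0) {g : Ω → ℝ}
    (hg : Integrable g P) : ((∫ x, g x ∂P : ℝ) : EReal) ≤ LambdaF f P g :=
  le_iInf fun ν => calc
    ((∫ x, g x ∂P : ℝ) : EReal) = ν + ((∫ x, (g x - ν) ∂P : ℝ) : EReal) := by
      rw [integral_sub hg (integrable_const ν), ← EReal.coe_add]; simp
    _ ≤ ν + eIntegral P (fun x => fstar f (g x - ν)) :=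
      add_le_add_right ((eIntegral_coe (hg.sub (integrable_const ν))).symm.le.trans
        (eIntegral_mono fun x => le_fstar h1 (g x - ν))) _

lemma LambdaF_zero_nonpos [IsProbabilityMeasure P] {y₀ : ℝ}
    (hsub : ∀ x, ((y₀ * (x - 1) : ℝ) : EReal) ≤ f x) : LambdaF f P 0 ≤ 0 := by
  have hy₀ : fstar f y₀ ≤ y₀ := by
    simpa using fstar_le_of_affine_le (α := y₀) (β := -y₀) fun x => by
      convert hsub x using 2; ring
  refine (LambdaF_le (-y₀) (integrable_const y₀) fun x => by simpa using hy₀).trans ?_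
  rw [← EReal.coe_add]; simp

end LambdaF

namespace IsF1

variable {a b : EReal} {f : ℝ → EReal} {Ω : Type*} [MeasurableSpace Ω]

lemma LambdaF_const_mul_le (hf : IsF1 a b f) {y₀ : ℝ}
    (hsub : ∀ x, ((y₀ * (x - 1) : ℝ) : EReal) ≤ f x) {P : Measure Ω} [IsProbabilityMeasure P]
    {g : Ω → ℝ} (hg : Integrable g P) {C : ℝ} (hC : ∀ x, |g x| ≤ C) {z w t : ℝ} (hz : z ≠ 1)
    (hfz : f z = w) (ht : 0 ≤ t) (htw : t * (2 * C * |z - 1|) ≤ w - y₀ * (z - 1)) :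
    LambdaF f P (fun x => t * g x) ≤ ((t * (∫ x, g x ∂P + 2 * C * |z - 1|) : ℝ) : EReal) := by
  have hz1 : z - 1 ≠ 0 := sub_ne_zero.mpr hz
  -- the shift `m` makes `(g - m) * (z - 1)` take values in `[0, 2 C |z - 1|]`
  set m := -C * |z - 1| / (z - 1)
  have hmz : m * (z - 1) = -C * |z - 1| := div_mul_cancel₀ _ hz1
  have hbound : ∀ r, |r| ≤ C → -(C * |z - 1|) ≤ r * (z - 1) ∧ r * (z - 1) ≤ C * |z - 1| :=
    fun r hr => abs_le.mp <| by
      rw [abs_mul]; exact mul_le_mul_of_nonneg_right hr (abs_nonneg _)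
  have hgP : |∫ x, g x ∂P| ≤ C := by
    simpa using norm_integral_le_of_norm_le_const (μ := P)
      (ae_of_all _ fun x => (Real.norm_eq_abs _).trans_le (hC x))
  have hgm : Integrable (fun x => g x - m) P := hg.sub (integrable_const m)
  have hu : Integrable (fun x => y₀ + t * z * (g x - m)) P :=
    (integrable_const _).add (hgm.const_mul _)
  refine (LambdaF_le (t * m - y₀) hu fun x => ?_).trans ?_
  · have hv := hbound (g x) (hC x)
    have := fstar_le_of_affine_le <| hf.affine_le_of_gap hsub hz hfz (v := t * (g x - m))
      (by nlinarith) (by nlinarith)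
    convert this using 2 <;> ring
  · rw [integral_add (integrable_const _) (hgm.const_mul _),
      integral_const_mul, integral_sub hg (integrable_const m)]
    simp only [integral_const, probReal_univ, one_smul]
    rw [← EReal.coe_add, EReal.coe_le_coe_iff]
    nlinarith [(hbound _ hgP).2]

lemma integral_le_of_sub_LambdaF_nonpos (hf : IsF1 a b f) (hsc : StrictlyConvexAtOne f)
    {Q P : Measure Ω} [IsProbabilityMeasure P] {Γ : Set (Ω → ℝ)} (hΓ : Convex ℝ Γ)
    (hΓ0 : 0 ∈ Γ) (hD : ∀ g ∈ Γ, ((∫ x, g x ∂Q : ℝ) : EReal) - LambdaF f P g ≤ 0)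
    {g : Ω → ℝ} (hg : g ∈ Γ) (hgP : Integrable g P) {C : ℝ}
    (hC : ∀ x, |g x| ≤ C) : ∫ x, g x ∂Q ≤ ∫ x, g x ∂P := by
  obtain ⟨y₀, hsub⟩ := hf.exists_subgradient
  have hC0 : 0 ≤ C := (abs_nonneg _).trans (hC (nonempty_of_isProbabilityMeasure P).some)
  refine le_of_forall_pos_le_add fun ε hε => ?_
  obtain ⟨z, w, hz, hzε, hfz, hgap⟩ :=
    hf.exists_gt_tangent hsc hsub (ε := ε / (2 * C + 1)) (by positivity)
  set K := 2 * C * |z - 1|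
  set δ := w - y₀ * (z - 1)
  have hK0 : 0 ≤ K := by positivity
  have hδ0 : 0 < δ := by linarith
  set t := δ / (K + δ) with ht
  have ht0 : 0 < t := by positivity
  have ht1 : t ≤ 1 := (div_le_one (by positivity)).mpr (by linarith)
  have htK : t * K ≤ δ := by
    rw [ht, div_mul_eq_mul_div, div_le_iff₀ (by positivity)]; nlinarith
  have hmem : (fun x => t * g x) ∈ Γ := hΓ.smul_mem_of_zero_mem hΓ0 hg ⟨ht0.le, ht1⟩
  have hQ := (EReal.sub_nonpos.mp (hD _ hmem)).trans
    (hf.LambdaF_const_mul_le hsub hgP hC hz hfz ht0.le htK)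
  rw [integral_const_mul, EReal.coe_le_coe_iff] at hQ
  have hKε : K ≤ ε := by
    rw [lt_div_iff₀ (by positivity)] at hzε
    nlinarith [abs_nonneg (z - 1)]
  linarith [le_of_mul_le_mul_left hQ ht0]

end IsF1

lemma integrable_of_mem_Cb {S : Type*} [TopologicalSpace S] [MeasurableSpace S]
    [OpensMeasurableSpace S] {μ : Measure S} [IsFiniteMeasure μ] {g : S → ℝ} (hg : g ∈ Cb S) :
    Integrable g μ := by
  obtain ⟨hgc, C, hC⟩ := hg
  exact Integrable.of_bound hgc.aestronglyMeasurable C (ae_of_all _ hC)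

lemma StrictlyAdmissibleGamma.eq_of_integral_le {S : Type*} [TopologicalSpace S]
    [MeasurableSpace S] [OpensMeasurableSpace S] {Γ : Set (S → ℝ)}
    (hΓ : StrictlyAdmissibleGamma Γ) {Q P : Measure S} [IsProbabilityMeasure Q]
    [IsProbabilityMeasure P] (hle : ∀ g ∈ Γ, ∫ x, g x ∂Q ≤ ∫ x, g x ∂P) : Q = P := by
  obtain ⟨Ψ, hΨ, hdet, hΨΓ⟩ := hΓ
  refine hdet Q P inferInstance inferInstance fun ψ hψ => ?_
  obtain ⟨c, ε, hε, hplus, hminus⟩ := hΨΓ ψ hψ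
  have hint : ∀ (μ : Measure S) [IsProbabilityMeasure μ] (r : ℝ),
      ∫ x, c + r * ψ x ∂μ = c + r * ∫ x, ψ x ∂μ := fun μ _ r => by
    rw [integral_add (integrable_const c) ((integrable_of_mem_Cb (hΨ hψ)).const_mul r),
      integral_const_mul]
    simp
  have h₁ := hle _ hplus
  have h₂ := hle _ (by simpa only [sub_eq_add_neg, ← neg_mul] using hminus)
  rw [hint Q, hint P] at h₁ h₂
  nlinarith

lemma iSup₂_nonneg_and_eq_zero_iff {ι : Type*} {Γ : Set ι} {Φ : ι → EReal} {g₀ : ι}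
    (hg₀ : g₀ ∈ Γ) (hΦ : 0 ≤ Φ g₀) {p : Prop} (hp : (∀ g ∈ Γ, Φ g ≤ 0) ↔ p) :
    0 ≤ ⨆ g ∈ Γ, Φ g ∧ ((⨆ g ∈ Γ, Φ g) = 0 ↔ p) := by
  have h0 : 0 ≤ ⨆ g ∈ Γ, Φ g := hΦ.trans (le_iSup₂_of_le g₀ hg₀ le_rfl)
  exact ⟨h0, by rw [← hp, ← iSup₂_le_iff, le_antisymm_iff, and_iff_left h0]⟩

theorem stmt11_general {S : Type*} [MetricSpace S] [MeasurableSpace S] [BorelSpace S]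
    (a b : EReal) (f : ℝ → EReal) (hf : IsF1 a b f)
    (Γ : Set (S → ℝ)) (hΓ : AdmissibleGamma Γ) :
    (StrictlyAdmissibleGamma Γ →
      ∀ Q P : Measure S, IsProbabilityMeasure Q → IsProbabilityMeasure P →
        0 ≤ ipmW Γ Q P ∧ (ipmW Γ Q P = 0 ↔ Q = P))
    ∧ (StrictlyConvexAtOne f → StrictlyAdmissibleGamma Γ →
      ∀ Q P : Measure S, IsProbabilityMeasure Q → IsProbabilityMeasure P →
        0 ≤ fGammaDiv f Γ Q P ∧ (fGammaDiv f Γ Q P = 0 ↔ Q = P)) := by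
  obtain ⟨hΓ0, hconv, hΓCb, -⟩ := hΓ
  refine ⟨fun hsΓ Q P _ _ => ?_, fun hsc hsΓ Q P _ _ => ?_⟩
  · refine iSup₂_nonneg_and_eq_zero_iff hΓ0 (by simp) ⟨fun h => ?_, ?_⟩
    · refine hsΓ.eq_of_integral_le fun g hg => ?_
      exact EReal.coe_le_coe_iff.mp (EReal.sub_nonpos.mp (h g hg))
    · rintro rfl g -
      simp
  · refine iSup₂_nonneg_and_eq_zero_iff hΓ0 ?_ ⟨fun h => ?_, ?_⟩
    · obtain ⟨y₀, hsub⟩ := hf.exists_subgradient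
      have := LambdaF_zero_nonpos (P := P) hsub
      simp only [integral_zero, EReal.coe_zero, zero_sub]
      exact EReal.neg_nonneg.mpr this
    · refine hsΓ.eq_of_integral_le fun g hg => ?_
      obtain ⟨-, C, hC⟩ := hΓCb hg
      exact hf.integral_le_of_sub_LambdaF_nonpos hsc hconv hΓ0 h hg
        (integrable_of_mem_Cb (hΓCb hg)) hC
    · rintro rfl g hg
      exact EReal.sub_nonpos.mpr
        (integral_le_LambdaF hf.at_one.le (integrable_of_mem_Cb (hΓCb hg)))

/-- On a complete separable metric space, for admissible `f` and
admissible `Γ ⊆ C_b(S)`: (i) if `Γ` is strictly admissible then `W^Γ` has the divergence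
property; (ii) if both `f` and `Γ` are strictly admissible then `D_f^Γ` has the divergence
property. -/
theorem stmt11 {S : Type*} [MetricSpace S] [CompleteSpace S]
    [TopologicalSpace.SeparableSpace S] [MeasurableSpace S] [BorelSpace S]
    (a b : EReal) (f : ℝ → EReal) (hf : IsF1 a b f) (hfa : AdmissibleF f)
    (Γ : Set (S → ℝ)) (hΓ : AdmissibleGamma Γ) :
    (StrictlyAdmissibleGamma Γ →
      ∀ Q P : Measure S, IsProbabilityMeasure Q → IsProbabilityMeasure P →
        0 ≤ ipmW Γ Q P ∧ (ipmW Γ Q P = 0 ↔ Q = P))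
    ∧ (StrictlyConvexAtOne f → StrictlyAdmissibleGamma Γ →
      ∀ Q P : Measure S, IsProbabilityMeasure Q → IsProbabilityMeasure P →
        0 ≤ fGammaDiv f Γ Q P ∧ (fGammaDiv f Γ Q P = 0 ↔ Q = P)) :=
  stmt11_general a b f hf Γ hΓ
end

section
/- Let S be a complete separable metric space, let c : S × S → [0,∞], let L ∈ (0,∞), and define Lip_b^L(S,c) = {g ∈ C_b(S) : |g(x) − g(y)| ≤ L·c(x,y) for all x,y ∈ S} and Lip^L(S,c) = {g ∈ C(S) : |g(x) − g(y)| ≤ L·c(x,y) for all x,y ∈ S}. Let f ∈ F₁(a,b) be admissible with f* bounded below. Then for all Borel probability measures Q, P on S: D_f^{Lip_b^L(S,c)}(Q‖P) = sup over g ∈ Lip^L(S,c) ∩ L¹(Q) of {E_Q[g] − Λ_f^P[g]}. -/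
open MeasureTheory Filter Set Topology ENNReal
open scoped Classical

noncomputable section

/-- The bounded continuous functions that are `L`-Lipschitz with respect to the cost
`c : S × S → [0,∞]`. -/
def LipbL (S : Type*) [TopologicalSpace S] (c : S × S → ℝ≥0∞) (L : ℝ) : Set (S → ℝ) :=
  {g | g ∈ Cb S ∧ ∀ x y : S, ENNReal.ofReal |g x - g y| ≤ ENNReal.ofReal L * c (x, y)}

/-- The (possibly unbounded) continuous functions that are `L`-Lipschitz with respect to
the cost `c : S × S → [0,∞]`. -/
def LipL (S : Type*) [TopologicalSpace S] (c : S × S → ℝ≥0∞) (L : ℝ) : Set (S → ℝ) :=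
  {g | Continuous g ∧ ∀ x y : S, ENNReal.ofReal |g x - g y| ≤ ENNReal.ofReal L * c (x, y)}

end

/-! Since `Lip_b^L(S,c) ⊆ Lip^L(S,c) ∩ L¹(Q)`, only `≥` needs proof. Truncate
`g ∈ Lip^L(S,c) ∩ L¹(Q)` to `g_n = max (-n) (min n g)`, which is bounded and still `L`-Lipschitz.
Given `ν` with `ν + E_P[f*(g - ν)]` close to `Λ_f^P[g]`, dominated convergence gives
`E_Q[g_n] → E_Q[g]` and `E_P[f*(g_n - ν)] → E_P[f*(g - ν)]`. The latter is dominated because `f*`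
is bounded below and quasiconvex, and `g_n` lies between `0` and `g`, so
`f*(g_n - ν) ≤ max (f*(g - ν)) (f*(-ν))`. -/

section EIntegral

variable {Ω : Type*} [MeasurableSpace Ω] {μ : Measure Ω} {ψ : Ω → ℝ}

lemma eIntegral_coe_eq (μ : Measure Ω) (ψ : Ω → ℝ) :
    eIntegral μ (fun x => (ψ x : EReal)) =
      ((∫⁻ x, ENNReal.ofReal (ψ x) ∂μ : ℝ≥0∞) : EReal) -
        ((∫⁻ x, ENNReal.ofReal (-ψ x) ∂μ : ℝ≥0∞) : EReal) := by
  simp [eIntegral, posE, ← EReal.coe_neg]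

lemma eIntegral_coe_of_integrable (h : Integrable ψ μ) :
    eIntegral μ (fun x => (ψ x : EReal)) = ((∫ x, ψ x ∂μ : ℝ) : EReal) := by
  have hneg : ∫⁻ x, ENNReal.ofReal (-ψ x) ∂μ ≠ ⊤ := h.neg.lintegral_lt_top.ne
  rw [eIntegral_coe_eq, integral_eq_lintegral_pos_part_sub_lintegral_neg_part h, EReal.coe_sub,
    EReal.coe_ennreal_toReal h.lintegral_lt_top.ne, EReal.coe_ennreal_toReal hneg]

lemma integrable_of_eIntegral_coe_ne_top [IsFiniteMeasure μ] (hψ : AEStronglyMeasurable ψ μ)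
    {m : ℝ} (hm : ∀ x, m ≤ ψ x) (h : eIntegral μ (fun x => (ψ x : EReal)) ≠ ⊤) :
    Integrable ψ μ := by
  have hneg : ∫⁻ x, ENNReal.ofReal (-ψ x) ∂μ ≠ ⊤ := by
    refine ne_top_of_le_ne_top ?_
      (lintegral_mono fun x => ENNReal.ofReal_le_ofReal (neg_le_neg (hm x)))
    rw [lintegral_const]
    exact ENNReal.mul_ne_top ENNReal.ofReal_ne_top (measure_ne_top _ _)
  have hpos : ∫⁻ x, ENNReal.ofReal (ψ x) ∂μ ≠ ⊤ := by
    intro htop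
    rw [eIntegral_coe_eq, htop, ← EReal.coe_ennreal_toReal hneg] at h
    exact h (EReal.top_sub_coe _)
  have hshift : Integrable (fun x => ψ x - m) μ := by
    have hle : ∫⁻ x, ENNReal.ofReal (ψ x - m) ∂μ ≤
        ∫⁻ x, ENNReal.ofReal (ψ x) + ENNReal.ofReal (-m) ∂μ :=
      lintegral_mono fun x => (ENNReal.ofReal_add_le : ENNReal.ofReal (ψ x + -m) ≤ _)
    refine (lintegral_ofReal_ne_top_iff_integrable (hψ.sub aestronglyMeasurable_const)
      (ae_of_all _ fun x => sub_nonneg.2 (hm x))).1 (ne_top_of_le_ne_top ?_ hle)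
    rw [lintegral_add_right _ measurable_const, lintegral_const]
    exact ENNReal.add_ne_top.2 ⟨hpos, ENNReal.mul_ne_top ENNReal.ofReal_ne_top (measure_ne_top _ _)⟩
  exact (hshift.add (integrable_const m)).congr (ae_of_all _ fun x => sub_add_cancel _ _)

end EIntegral

section Quasiconvex

variable {φ : ℝ → ℝ}

lemma QuasiconvexOn.le_max_of_mem_uIcc {β : Type*} [LinearOrder β] {ψ : ℝ → β}
    (hψ : QuasiconvexOn ℝ univ ψ) {u v w : ℝ} (hu : u ∈ uIcc v w) :
    ψ u ≤ max (ψ v) (ψ w) :=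
  ((hψ _).ordConnected.uIcc_subset ⟨mem_univ v, le_max_left _ _⟩
    ⟨mem_univ w, le_max_right _ _⟩ hu).2

lemma QuasiconvexOn.measurable (hφ : QuasiconvexOn ℝ univ φ) : Measurable φ :=
  measurable_of_Iic fun r => by
    have := (hφ r).ordConnected.measurableSet
    simp only [mem_univ, true_and] at this
    exact this

lemma QuasiconvexOn.comp_sub_const {β : Type*} [LE β] {ψ : ℝ → β}
    (hψ : QuasiconvexOn ℝ univ ψ) (ν : ℝ) : QuasiconvexOn ℝ univ (fun y => ψ (y - ν)) :=
  fun r => by simpa [sub_eq_add_neg] using (hψ r).translate_preimage_left (-ν)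

lemma QuasiconvexOn.abs_le_of_mem_uIcc (hφ : QuasiconvexOn ℝ univ φ) {m : ℝ}
    (hm : ∀ y, m ≤ φ y) {u v w : ℝ} (hu : u ∈ uIcc v w) : |φ u| ≤ |m| + |φ v| + |φ w| := by
  have hmax := hφ.le_max_of_mem_uIcc hu
  rw [abs_le]
  constructor
  · linarith [neg_abs_le m, hm u, abs_nonneg (φ v), abs_nonneg (φ w)]
  · linarith [max_le_add_of_nonneg (abs_nonneg (φ v)) (abs_nonneg (φ w)),
      max_le_max (le_abs_self (φ v)) (le_abs_self (φ w)), abs_nonneg m]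

end Quasiconvex

section LegendreTransform

variable {f : ℝ → EReal}

lemma fstar_quasiconvexOn (f : ℝ → EReal) : QuasiconvexOn ℝ univ (fstar f) := by
  intro r
  have hsub : {y ∈ univ | fstar f y ≤ r} = ⋂ x : ℝ, {y | ((x * y : ℝ) : EReal) - f x ≤ r} := by
    ext y
    simp [fstar]
  rw [hsub]
  refine convex_iInter fun x => ?_
  rcases le_total 0 x with hx | hx
  · simpa using Monotone.quasiconvexOn (𝕜 := ℝ) (fun y z hyz => EReal.sub_le_sub
      (EReal.coe_le_coe_iff.2 (mul_le_mul_of_nonneg_left hyz hx)) le_rfl) r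
  · simpa using Antitone.quasiconvexOn (𝕜 := ℝ) (fun y z hyz => EReal.sub_le_sub
      (EReal.coe_le_coe_iff.2 (mul_le_mul_of_nonpos_left hyz hx)) le_rfl) r

lemma coe_le_fstar (h1 : f 1 = 0) (y : ℝ) : (y : EReal) ≤ fstar f y :=
  calc (y : EReal) = ((1 * y : ℝ) : EReal) - f 1 := by simp [h1]
    _ ≤ fstar f y := le_iSup (fun x : ℝ => ((x * y : ℝ) : EReal) - f x) 1

lemma exists_coe_eq_fstar (h1 : f 1 = 0) (hfin : ∀ y, fstar f y ≠ ⊤) :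
    ∃ φ : ℝ → ℝ, ∀ y, (φ y : EReal) = fstar f y :=
  ⟨fun y => (fstar f y).toReal, fun y =>
    EReal.coe_toReal (hfin y) ((EReal.bot_lt_coe y).trans_le (coe_le_fstar h1 y)).ne'⟩

lemma quasiconvexOn_of_coe_eq_fstar {φ : ℝ → ℝ} (hφ : ∀ y, (φ y : EReal) = fstar f y) :
    QuasiconvexOn ℝ univ φ :=
  fun r => by simpa [← hφ] using fstar_quasiconvexOn f r

lemma LambdaF_le_of_integrable {Ω : Type*} [MeasurableSpace Ω] {P : Measure Ω} {g : Ω → ℝ}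
    {φ : ℝ → ℝ} (hφ : ∀ y, (φ y : EReal) = fstar f y) (ν : ℝ)
    (h : Integrable (fun x => φ (g x - ν)) P) :
    LambdaF f P g ≤ ((ν + ∫ x, φ (g x - ν) ∂P : ℝ) : EReal) :=
  calc LambdaF f P g ≤ ν + eIntegral P (fun x => fstar f (g x - ν)) := iInf_le _ ν
    _ = _ := by simp_rw [← hφ]; rw [eIntegral_coe_of_integrable h, EReal.coe_add]

end LegendreTransform

section Truncation

def truncate (n t : ℝ) : ℝ := max (-n) (min n t)

variable {n : ℝ}

lemma continuous_truncate (n : ℝ) : Continuous (truncate n) :=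
  continuous_const.max (continuous_const.min continuous_id)

lemma truncate_mem_uIcc (hn : 0 ≤ n) (t : ℝ) : truncate n t ∈ uIcc 0 t := by
  simp only [truncate, mem_uIcc]
  grind

lemma abs_truncate_le_abs (hn : 0 ≤ n) (t : ℝ) : |truncate n t| ≤ |t| := by
  have := truncate_mem_uIcc hn t
  rw [mem_uIcc] at this
  grind

lemma abs_truncate_le (hn : 0 ≤ n) (t : ℝ) : |truncate n t| ≤ n :=
  abs_le.2 ⟨le_max_left _ _, max_le (by linarith) (min_le_left _ _)⟩

lemma truncate_eq_self {t : ℝ} (h : |t| ≤ n) : truncate n t = t := by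
  rw [abs_le] at h
  rw [truncate, min_eq_right h.2, max_eq_right h.1]

lemma abs_truncate_sub_truncate_le (n s t : ℝ) : |truncate n s - truncate n t| ≤ |s - t| :=
  calc |truncate n s - truncate n t| ≤ |min n s - min n t| := by
        simpa only [truncate, max_comm (-n)] using abs_max_sub_max_le_abs (min n s) (min n t) (-n)
    _ ≤ max |n - n| |s - t| := abs_min_sub_min_le_max _ _ _ _
    _ = |s - t| := by simp

lemma eventually_truncate_eq (t : ℝ) : ∀ᶠ k : ℕ in atTop, truncate k t = t := by
  filter_upwards [eventually_ge_atTop ⌈|t|⌉₊] with k hk using truncate_eq_self (Nat.ceil_le.1 hk)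

lemma truncate_comp_mem_LipbL {S : Type*} [TopologicalSpace S] {c : S × S → ℝ≥0∞} {L : ℝ}
    {g : S → ℝ} (hg : g ∈ LipL S c L) (hn : 0 ≤ n) : (fun x => truncate n (g x)) ∈ LipbL S c L :=
  ⟨⟨(continuous_truncate n).comp hg.1, n, fun _ => abs_truncate_le hn _⟩, fun x y =>
    (ENNReal.ofReal_le_ofReal (abs_truncate_sub_truncate_le n _ _)).trans (hg.2 x y)⟩

variable {Ω : Type*} [MeasurableSpace Ω] {μ : Measure Ω} {g : Ω → ℝ}

lemma tendsto_integral_truncate (hg : Integrable g μ) :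
    Tendsto (fun k : ℕ => ∫ x, truncate k (g x) ∂μ) atTop (𝓝 (∫ x, g x ∂μ)) :=
  tendsto_integral_of_dominated_convergence (fun x => |g x|)
    (fun k => (continuous_truncate k).comp_aestronglyMeasurable hg.1) hg.abs
    (fun k => ae_of_all _ fun x => abs_truncate_le_abs k.cast_nonneg _)
    (ae_of_all _ fun x => tendsto_const_nhds.congr'
      (by filter_upwards [eventually_truncate_eq (g x)] with k hk using hk.symm))

lemma integrable_comp_truncate [IsFiniteMeasure μ] {φ : ℝ → ℝ} (hφ : QuasiconvexOn ℝ univ φ)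
    {m : ℝ} (hm : ∀ y, m ≤ φ y) (hg : AEMeasurable g μ) (hint : Integrable (fun x => φ (g x)) μ)
    (hn : 0 ≤ n) : Integrable (fun x => φ (truncate n (g x))) μ :=
  ((integrable_const _).add hint.abs).mono'
    (hφ.measurable.comp_aemeasurable
      ((continuous_truncate n).measurable.comp_aemeasurable hg)).aestronglyMeasurable
    (ae_of_all _ fun _ => hφ.abs_le_of_mem_uIcc hm (truncate_mem_uIcc hn _))

lemma tendsto_integral_comp_truncate [IsFiniteMeasure μ] {φ : ℝ → ℝ}
    (hφ : QuasiconvexOn ℝ univ φ) {m : ℝ} (hm : ∀ y, m ≤ φ y) (hg : AEMeasurable g μ)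
    (hint : Integrable (fun x => φ (g x)) μ) :
    Tendsto (fun k : ℕ => ∫ x, φ (truncate k (g x)) ∂μ) atTop (𝓝 (∫ x, φ (g x) ∂μ)) :=
  tendsto_integral_of_dominated_convergence (fun x => |m| + |φ 0| + |φ (g x)|)
    (fun k => (hφ.measurable.comp_aemeasurable
      ((continuous_truncate k).measurable.comp_aemeasurable hg)).aestronglyMeasurable)
    ((integrable_const _).add hint.abs)
    (fun k => ae_of_all _ fun x => hφ.abs_le_of_mem_uIcc hm (truncate_mem_uIcc k.cast_nonneg _))
    (ae_of_all _ fun x => tendsto_const_nhds.congr'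
      (by filter_upwards [eventually_truncate_eq (g x)] with k hk; rw [hk]))

end Truncation

section LipschitzTruncation

variable {S : Type*} [TopologicalSpace S] [MeasurableSpace S] [OpensMeasurableSpace S]
  {f : ℝ → EReal} {φ : ℝ → ℝ} {c : S × S → ℝ≥0∞} {L : ℝ} {Q P : Measure S} {g : S → ℝ}

lemma integrable_of_mem_Cb_s19 [IsFiniteMeasure Q] (hg : g ∈ Cb S) : Integrable g Q :=
  let ⟨hgc, C, hC⟩ := hg
  .of_bound hgc.aestronglyMeasurable C (ae_of_all _ hC)

lemma integral_sub_LambdaF_le_fGammaDiv_LipbL [IsFiniteMeasure P]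
    (hφ : ∀ y, (φ y : EReal) = fstar f y) {m : ℝ} (hm : ∀ y, m ≤ φ y)
    (hg : g ∈ LipL S c L) (hgQ : Integrable g Q) :
    ((∫ x, g x ∂Q : ℝ) : EReal) - LambdaF f P g ≤ fGammaDiv f (LipbL S c L) Q P := by
  have hφqc := quasiconvexOn_of_coe_eq_fstar hφ
  refine EReal.ge_of_forall_gt_iff_ge.1 fun r hr => ?_
  have hΛ : LambdaF f P g < ((∫ x, g x ∂Q - r : ℝ) : EReal) := by
    rw [EReal.coe_sub, EReal.lt_sub_iff_add_lt (.inl (EReal.coe_ne_bot r))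
      (.inl (EReal.coe_ne_top r)), add_comm]
    exact EReal.add_lt_of_lt_sub hr
  obtain ⟨ν, hν⟩ := iInf_lt_iff.1 hΛ
  simp_rw [← hφ] at hν
  have hint : Integrable (fun x => φ (g x - ν)) P :=
    integrable_of_eIntegral_coe_ne_top
      (hφqc.measurable.comp (hg.1.measurable.sub_const ν)).aestronglyMeasurable
      (fun _ => hm _) (fun htop => by simp [htop] at hν)
  rw [eIntegral_coe_of_integrable hint, ← EReal.coe_add, EReal.coe_lt_coe_iff] at hν
  have hlim := (tendsto_integral_truncate hgQ).sub ((tendsto_const_nhds (x := ν)).add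
    (tendsto_integral_comp_truncate (hφqc.comp_sub_const ν) (fun _ => hm _)
      hg.1.measurable.aemeasurable hint))
  obtain ⟨k, hk⟩ := (hlim.eventually (eventually_gt_nhds (by linarith))).exists
  have hΛk := LambdaF_le_of_integrable (g := fun x => truncate k (g x)) hφ ν
    (integrable_comp_truncate (hφqc.comp_sub_const ν) (fun _ => hm _)
      hg.1.measurable.aemeasurable hint k.cast_nonneg)
  calc (r : EReal)
      ≤ ((∫ x, truncate k (g x) ∂Q - (ν + ∫ x, φ (truncate k (g x) - ν) ∂P) : ℝ) : EReal) :=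
        EReal.coe_le_coe_iff.2 hk.le
    _ ≤ ((∫ x, truncate k (g x) ∂Q : ℝ) : EReal) - LambdaF f P (fun x => truncate k (g x)) := by
        rw [EReal.coe_sub]
        exact EReal.sub_le_sub le_rfl hΛk
    _ ≤ fGammaDiv f (LipbL S c L) Q P :=
        le_biSup (fun g => ((∫ x, g x ∂Q : ℝ) : EReal) - LambdaF f P g)
          (truncate_comp_mem_LipbL hg k.cast_nonneg)

end LipschitzTruncation

theorem stmt19_general {S : Type*} [MetricSpace S] [MeasurableSpace S] [BorelSpace S]
    (a b : EReal) (f : ℝ → EReal) (hf : IsF1 a b f) (hfa : AdmissibleF f)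
    (hbdd : ∃ m : ℝ, ∀ y : ℝ, (m : EReal) ≤ fstar f y)
    (c : S × S → ℝ≥0∞) (L : ℝ)
    (Q P : Measure S) [IsProbabilityMeasure Q] [IsProbabilityMeasure P] :
    fGammaDiv f (LipbL S c L) Q P
      = ⨆ g ∈ {g : S → ℝ | g ∈ LipL S c L ∧ Integrable g Q},
          (((∫ x, g x ∂Q : ℝ) : EReal) - LambdaF f P g) := by
  obtain ⟨φ, hφ⟩ := exists_coe_eq_fstar hf.at_one hfa.1
  obtain ⟨m, hm⟩ := hbdd
  have hmφ : ∀ y, m ≤ φ y := fun y => EReal.coe_le_coe_iff.1 ((hm y).trans_eq (hφ y).symm)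
  exact le_antisymm
    (biSup_mono fun g hg => ⟨⟨hg.1.1, hg.2⟩, integrable_of_mem_Cb_s19 hg.1⟩)
    (iSup₂_le fun g hg => integral_sub_LambdaF_le_fGammaDiv_LipbL hφ hmφ hg.1 hg.2)

/-- For admissible `f` with `f*` bounded below, the `(f, Lip_b^L(S,c))`-
divergence is unchanged when the test functions are extended to all `Q`-integrable
(possibly unbounded) `L`-Lipschitz continuous functions:
`D_f^{Lip_b^L(S,c)}(Q‖P) = sup_{g ∈ Lip^L(S,c) ∩ L¹(Q)} {E_Q[g] - Λ_f^P[g]}`. -/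
theorem stmt19 {S : Type*} [MetricSpace S] [CompleteSpace S]
    [TopologicalSpace.SeparableSpace S] [MeasurableSpace S] [BorelSpace S]
    (a b : EReal) (f : ℝ → EReal) (hf : IsF1 a b f) (hfa : AdmissibleF f)
    (hbdd : ∃ m : ℝ, ∀ y : ℝ, (m : EReal) ≤ fstar f y)
    (c : S × S → ℝ≥0∞) (L : ℝ) (hL : 0 < L)
    (Q P : Measure S) [IsProbabilityMeasure Q] [IsProbabilityMeasure P] :
    fGammaDiv f (LipbL S c L) Q P
      = ⨆ g ∈ {g : S → ℝ | g ∈ LipL S c L ∧ Integrable g Q},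
          (((∫ x, g x ∂Q : ℝ) : EReal) - LambdaF f P g) :=
  stmt19_general a b f hf hfa hbdd c L Q P
end
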